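/- Let X be a stationary time series with autocovariance γ satisfying Σ_{k∈ℤ}|γ_k| < ∞, let Z_i = X̃_i + ξ_i be the privatized data with truncation level τ_n and i.i.d. Laplace(2τ_n/α) noise, let f̂_m be the projection estimator on a model S_m of dimension D_m, and let f_m be the L²-projection of the spectral density f onto S_m. Then E‖f̂_m − f_m‖⁴ ≤ C D_m² [ (Σ_{k∈ℤ}|γ_k| + 8τ_n²/α²)⁴ + n⁴τ_n⁸/(1 ∧ α⁸) ] for a numerical constant C > 0. -/

import Mathlib

open MeasureTheory ProbabilityTheory Real

noncomputable def sampleMean (n : ℕ) (x : Fin n → ℝ) : ℝ := (∑ t, x t) / n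

/-- The centred periodogram `I_n(ω) = (1/(2πn)) |∑_{t=1}^n (x_t - x̄_n) e^{-itω}|²`. -/
noncomputable def periodogram (n : ℕ) (x : Fin n → ℝ) (ω : ℝ) : ℝ :=
  (1 / (2 * π * n)) *
    ‖∑ t : Fin n, ((x t - sampleMean n x : ℝ) : ℂ) *
      Complex.exp (-(Complex.I * ((t.1 + 1 : ℕ) : ℂ) * (ω : ℂ)))‖ ^ 2

/-- `ξ` is a centred Laplace random variable with scale parameter `b`. -/
def IsLaplace {Ω : Type*} [MeasurableSpace Ω] (P : Measure Ω) (ξ : Ω → ℝ) (b : ℝ) : Prop :=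
  Measure.map ξ P =
    volume.withDensity fun x => ENNReal.ofReal ((1 / (2 * b)) * Real.exp (-|x| / b))

/-!
`f̂_m − f_m` is the `L²`-orthogonal projection of `Î_n − f` onto `S_m`, so by Bessel's inequality
its squared norm is at most `∫_{−π}^{π} (Î_n − f)²`. Pointwise `0 ≤ I_n^Z ≤ ∑ Z_t²` and
`|f| ≤ ∑ |γ_k|`, hence `‖f̂_m − f_m‖⁴ ≤ 4π² (∑ Z_t² + ∑ |γ_k| + 8τ²/α²)⁴`. As `|X̃_t| ≤ τ`, the
fourth power of `∑ Z_t²` is at most `128 (n⁴τ⁸ + n³ ∑ ξ_t⁸)`, and a centred Laplace variable of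
scale `b` has `E ξ⁸ = 8! b⁸`.
-/

open Set Finset

lemma integral_exp_neg_abs_div_mul_abs_pow {b : ℝ} (hb : 0 < b) (k : ℕ) :
    ∫ x : ℝ, exp (-|x| / b) * |x| ^ k = 2 * (k.factorial * b ^ (k + 1)) := by
  have hGamma := integral_rpow_mul_exp_neg_mul_Ioi (a := k + 1) (by positivity) (one_div_pos.2 hb)
  rw [add_sub_cancel_right, one_div_one_div, Real.Gamma_nat_eq_factorial, ← Nat.cast_add_one,
    Real.rpow_natCast] at hGamma
  rw [integral_comp_abs (f := fun x => exp (-x / b) * x ^ k), mul_comm (k.factorial : ℝ), ← hGamma]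
  congr 1
  refine setIntegral_congr_fun measurableSet_Ioi fun x _ => ?_
  rw [Real.rpow_natCast, mul_comm, neg_div, one_div_mul_eq_div]

lemma integral_laplace_density_mul_abs_pow {b : ℝ} (hb : 0 < b) (k : ℕ) :
    ∫ x : ℝ, 1 / (2 * b) * exp (-|x| / b) * |x| ^ k = k.factorial * b ^ k := by
  simp_rw [mul_assoc, integral_const_mul, integral_exp_neg_abs_div_mul_abs_pow hb, pow_succ]
  field_simp

lemma IsLaplace.integral_abs_pow {Ω : Type*} [MeasurableSpace Ω] {P : Measure Ω} {ξ : Ω → ℝ}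
    {b : ℝ} (h : IsLaplace P ξ b) (hξ : AEMeasurable ξ P) (hb : 0 < b) (k : ℕ) :
    ∫ ω, |ξ ω| ^ k ∂P = k.factorial * b ^ k := by
  rw [← integral_map (f := fun y => |y| ^ k) hξ (by fun_prop), h,
    integral_withDensity_eq_integral_toReal_smul (by fun_prop)
      (ae_of_all _ fun _ => ENNReal.ofReal_lt_top)]
  simp_rw [ENNReal.toReal_ofReal (by positivity : 0 ≤ 1 / (2 * b) * exp (-|_| / b)), smul_eq_mul]
  exact integral_laplace_density_mul_abs_pow hb k

lemma IsLaplace.integrable_abs_pow {Ω : Type*} [MeasurableSpace Ω] {P : Measure Ω} {ξ : Ω → ℝ}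
    {b : ℝ} (h : IsLaplace P ξ b) (hξ : AEMeasurable ξ P) (hb : 0 < b) (k : ℕ) :
    Integrable (fun ω => |ξ ω| ^ k) P :=
  Integrable.of_integral_ne_zero <| by rw [h.integral_abs_pow hξ hb]; positivity

section Orthonormal

variable {α ι : Type*} [MeasurableSpace α] {μ : Measure α} [Fintype ι] [DecidableEq ι]
  {φ : ι → α → ℝ}

lemma memLp_two_of_integral_mul_self_eq_one {f : α → ℝ} (hf : AEStronglyMeasurable f μ)
    (h : ∫ a, f a * f a ∂μ = 1) : MemLp f 2 μ :=
  (memLp_two_iff_integrable_sq hf).2 <| by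
    simpa only [sq] using Integrable.of_integral_ne_zero (h ▸ one_ne_zero)

lemma integrable_mul_of_memLp_two {f g : α → ℝ} (hf : MemLp f 2 μ) (hg : MemLp g 2 μ) :
    Integrable (fun a => f a * g a) μ :=
  hf.integrable_mul hg

lemma integral_sq_sum_mul (hφ2 : ∀ i, MemLp (φ i) 2 μ)
    (hφ : ∀ i j, ∫ a, φ i a * φ j a ∂μ = if i = j then 1 else 0) (c : ι → ℝ) :
    ∫ a, (∑ i, c i * φ i a) ^ 2 ∂μ = ∑ i, c i ^ 2 := by
  have hexpand : ∀ a, (∑ i, c i * φ i a) ^ 2 = ∑ i, ∑ j, c i * c j * (φ i a * φ j a) := by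
    intro a
    simp_rw [sq, sum_mul_sum, mul_mul_mul_comm]
  have hint : ∀ i j, Integrable (fun a => c i * c j * (φ i a * φ j a)) μ :=
    fun i j => (integrable_mul_of_memLp_two (hφ2 i) (hφ2 j)).const_mul _
  simp_rw [hexpand]
  rw [integral_finsetSum _ fun i _ => integrable_finsetSum _ fun j _ => hint i j]
  simp_rw [integral_finsetSum _ fun j _ => hint _ j, integral_const_mul, hφ, mul_ite, mul_one,
    mul_zero, sum_ite_eq, Finset.mem_univ, if_true, sq]

lemma sum_sq_integral_mul_le (hφ2 : ∀ i, MemLp (φ i) 2 μ)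
    (hφ : ∀ i j, ∫ a, φ i a * φ j a ∂μ = if i = j then 1 else 0) {g : α → ℝ}
    (hg : MemLp g 2 μ) :
    ∑ i, (∫ a, g a * φ i a ∂μ) ^ 2 ≤ ∫ a, g a ^ 2 ∂μ := by
  set c : ι → ℝ := fun i => ∫ a, g a * φ i a ∂μ
  set h : α → ℝ := fun a => ∑ i, c i * φ i a
  have hh : MemLp h 2 μ := memLp_finsetSum _ fun i _ => (hφ2 i).const_mul (c i)
  have hgh : ∫ a, g a * h a ∂μ = ∑ i, c i ^ 2 := by
    simp_rw [h, mul_sum, mul_left_comm (g _)]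
    rw [integral_finsetSum _ fun i _ => (integrable_mul_of_memLp_two hg (hφ2 i)).const_mul (c i)]
    simp_rw [integral_const_mul, sq]
    rfl
  have hexpand : ∫ a, (g a - h a) ^ 2 ∂μ
      = ∫ a, g a ^ 2 ∂μ - 2 * ∫ a, g a * h a ∂μ + ∫ a, h a ^ 2 ∂μ := by
    have hgh2 := (integrable_mul_of_memLp_two hg hh).const_mul 2
    simp_rw [sub_sq, mul_assoc]
    rw [integral_add (f := fun a => g a ^ 2 - 2 * (g a * h a)) (hg.integrable_sq.sub hgh2)
        hh.integrable_sq, integral_sub hg.integrable_sq hgh2, integral_const_mul]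
  have hnonneg : 0 ≤ ∫ a, (g a - h a) ^ 2 ∂μ := integral_nonneg fun _ => sq_nonneg _
  rw [hexpand, hgh, integral_sq_sum_mul hφ2 hφ] at hnonneg
  linarith

lemma integral_sq_sub_sum_integral_mul_le (hφ2 : ∀ i, MemLp (φ i) 2 μ)
    (hφ : ∀ i j, ∫ a, φ i a * φ j a ∂μ = if i = j then 1 else 0) {u v : α → ℝ}
    (hu : MemLp u 2 μ) (hv : MemLp v 2 μ) :
    ∫ s, (∑ i, (∫ w, u w * φ i w ∂μ) * φ i s - ∑ i, (∫ w, v w * φ i w ∂μ) * φ i s) ^ 2 ∂μ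
      ≤ ∫ s, (u s - v s) ^ 2 ∂μ := by
  have hcoeff : ∀ i, (∫ w, u w * φ i w ∂μ) - ∫ w, v w * φ i w ∂μ
      = ∫ w, (u w - v w) * φ i w ∂μ := fun i => by
    rw [← integral_sub (integrable_mul_of_memLp_two hu (hφ2 i))
      (integrable_mul_of_memLp_two hv (hφ2 i))]
    simp_rw [sub_mul]
  simp_rw [← sum_sub_distrib, ← sub_mul, hcoeff, integral_sq_sum_mul hφ2 hφ]
  exact sum_sq_integral_mul_le hφ2 hφ (hu.sub hv)

end Orthonormal

lemma continuous_periodogram (n : ℕ) (x : Fin n → ℝ) : Continuous (periodogram n x) := by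
  unfold periodogram
  fun_prop

lemma periodogram_nonneg (n : ℕ) (x : Fin n → ℝ) (ω : ℝ) : 0 ≤ periodogram n x ω := by
  unfold periodogram
  positivity

lemma sum_sq_sub_sampleMean_le (n : ℕ) (x : Fin n → ℝ) :
    ∑ t, (x t - sampleMean n x) ^ 2 ≤ ∑ t, x t ^ 2 := by
  set m := sampleMean n x
  have hsum : ∑ t, x t = n * m := by
    rcases eq_or_ne n 0 with rfl | hn
    · simp
    · simp only [m, sampleMean]
      field_simp
  have hexpand : ∑ t, (x t - m) ^ 2 = ∑ t, x t ^ 2 - n * m ^ 2 := by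
    simp only [sub_sq, sum_add_distrib, sum_sub_distrib, ← sum_mul, ← mul_sum, hsum, sum_const,
      card_univ, Fintype.card_fin, nsmul_eq_mul]
    ring
  rw [hexpand]
  have : 0 ≤ (n : ℝ) * m ^ 2 := by positivity
  linarith

lemma periodogram_le_sum_sq (n : ℕ) (x : Fin n → ℝ) (ω : ℝ) :
    periodogram n x ω ≤ ∑ t, x t ^ 2 := by
  set y : Fin n → ℝ := fun t => x t - sampleMean n x
  have hnorm : ‖∑ t : Fin n, (y t : ℂ) * Complex.exp (-(Complex.I * ((t.1 + 1 : ℕ) : ℂ) * ω))‖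
      ≤ ∑ t, |y t| := by
    refine (norm_sum_le _ _).trans_eq (sum_congr rfl fun t _ => ?_)
    rw [norm_mul, Complex.norm_exp, Complex.norm_real, Real.norm_eq_abs]
    simp
  have hcs : (∑ t, |y t|) ^ 2 ≤ n * ∑ t, y t ^ 2 := by
    simpa using sq_sum_le_card_mul_sum_sq (s := univ) (f := fun t => |y t|)
  have hy : 0 ≤ ∑ t, y t ^ 2 := sum_nonneg fun _ _ => sq_nonneg _
  calc periodogram n x ω ≤ 1 / (2 * π * n) * (n * ∑ t, y t ^ 2) := by
        unfold periodogram
        gcongr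
        exact (pow_le_pow_left₀ (norm_nonneg _) hnorm 2).trans hcs
    _ ≤ ∑ t, y t ^ 2 := by
        rcases eq_or_ne n 0 with rfl | hn
        · simp
        · rw [one_div_mul_eq_div, mul_comm (n : ℝ), mul_div_mul_right _ _ (Nat.cast_ne_zero.2 hn)]
          exact div_le_self hy (by linarith [pi_gt_three])
    _ ≤ ∑ t, x t ^ 2 := sum_sq_sub_sampleMean_le n x

lemma norm_mul_cos_le (c x : ℝ) : ‖c * cos x‖ ≤ |c| := by
  rw [norm_mul, norm_eq_abs, norm_eq_abs]
  exact mul_le_of_le_one_right (abs_nonneg c) (abs_cos_le_one x)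

lemma continuous_tsum_mul_cos {γ : ℤ → ℝ} (hγ : Summable fun k => |γ k|) :
    Continuous fun ω : ℝ => ∑' k : ℤ, γ k * cos (k * ω) :=
  continuous_tsum (fun _ => by fun_prop) hγ fun k ω => norm_mul_cos_le (γ k) (k * ω)

lemma abs_one_div_two_pi_mul_tsum_mul_cos_le {γ : ℤ → ℝ} (hγ : Summable fun k => |γ k|)
    (ω : ℝ) : |1 / (2 * π) * ∑' k : ℤ, γ k * cos (k * ω)| ≤ ∑' k : ℤ, |γ k| := by
  rw [abs_mul, abs_of_pos (by positivity)]
  refine (mul_le_of_le_one_left (abs_nonneg _) ?_).trans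
    (tsum_of_norm_bounded hγ.hasSum fun k => norm_mul_cos_le (γ k) (k * ω))
  rw [div_le_one (by positivity)]
  linarith [pi_gt_three]

lemma integral_sq_projection_periodogram_sub_le {n D : ℕ} (y : Fin n → ℝ) {q G : ℝ}
    (hq : 0 ≤ q) {f : ℝ → ℝ} (hf : Measurable f) (hfG : ∀ ω, |f ω| ≤ G) {φ : Fin D → ℝ → ℝ}
    (hφ2 : ∀ i, MemLp (φ i) 2 (volume.restrict (Icc (-π) π)))
    (hφ : ∀ i j, (∫ ω in Icc (-π) π, φ i ω * φ j ω) = if i = j then 1 else 0) :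
    ∫ s in Icc (-π) π,
        ((∑ i, (∫ w in Icc (-π) π, (periodogram n y w - q) * φ i w) * φ i s)
          - ∑ i, (∫ w in Icc (-π) π, f w * φ i w) * φ i s) ^ 2
      ≤ 2 * π * (∑ t, y t ^ 2 + (G + q)) ^ 2 := by
  set S := ∑ t, y t ^ 2
  have hI0 := periodogram_nonneg n y
  have hIS := periodogram_le_sum_sq n y
  have hu : MemLp (fun w => periodogram n y w - q) 2 (volume.restrict (Icc (-π) π)) :=
    MemLp.of_bound ((continuous_periodogram n y).sub continuous_const).aestronglyMeasurable
      (S + q) (ae_of_all _ fun w => by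
        rw [norm_eq_abs, abs_le]
        constructor <;> linarith [hI0 w, hIS w])
  have hv : MemLp f 2 (volume.restrict (Icc (-π) π)) :=
    MemLp.of_bound hf.aestronglyMeasurable G (ae_of_all _ hfG)
  have hdiff : ∀ w ∈ Icc (-π) π, ‖(periodogram n y w - q - f w) ^ 2‖ ≤ (S + (G + q)) ^ 2 := by
    intro w _
    rw [norm_pow, norm_eq_abs, sq_abs, ← sq_abs]
    have := abs_le.1 (hfG w)
    gcongr
    rw [abs_le]
    constructor <;> linarith [hI0 w, hIS w]
  calc _ ≤ ∫ s in Icc (-π) π, (periodogram n y s - q - f s) ^ 2 :=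
        integral_sq_sub_sum_integral_mul_le hφ2 hφ hu hv
    _ ≤ (S + (G + q)) ^ 2 * volume.real (Icc (-π) π) :=
        (le_abs_self _).trans (norm_setIntegral_le_of_norm_le_const measure_Icc_lt_top hdiff)
    _ = 2 * π * (S + (G + q)) ^ 2 := by
        rw [Real.volume_real_Icc_of_le (by linarith [pi_pos])]
        ring

lemma sum_sq_add_pow_four_le {n : ℕ} {τ : ℝ} (y e : Fin n → ℝ) (hy : ∀ t, |y t| ≤ τ) :
    (∑ t, (y t + e t) ^ 2) ^ 4 ≤ 128 * (n ^ 4 * τ ^ 8 + n ^ 3 * ∑ t, e t ^ 8) := by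
  have hsq : ∑ t, (y t + e t) ^ 2 ≤ 2 * (n * τ ^ 2 + ∑ t, e t ^ 2) := by
    have hterm : ∀ t, (y t + e t) ^ 2 ≤ 2 * (τ ^ 2 + e t ^ 2) := fun t => by
      have : y t ^ 2 ≤ τ ^ 2 := sq_le_sq' (abs_le.1 (hy t)).1 (abs_le.1 (hy t)).2
      nlinarith [sq_nonneg (y t - e t)]
    calc _ ≤ ∑ t, 2 * (τ ^ 2 + e t ^ 2) := sum_le_sum fun t _ => hterm t
      _ = _ := by simp [← mul_sum, sum_add_distrib]
  have hpow : (∑ t, e t ^ 2) ^ 4 ≤ n ^ 3 * ∑ t, e t ^ 8 := by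
    simpa [← pow_mul] using
      pow_sum_le_card_mul_sum_pow (s := univ) (f := fun t => e t ^ 2) (fun _ _ => sq_nonneg _) 3
  calc _ ≤ (2 * (n * τ ^ 2 + ∑ t, e t ^ 2)) ^ 4 :=
        pow_le_pow_left₀ (sum_nonneg fun _ _ => sq_nonneg _) hsq 4
    _ = 16 * (n * τ ^ 2 + ∑ t, e t ^ 2) ^ 4 := by ring
    _ ≤ 16 * (2 ^ 3 * ((n * τ ^ 2) ^ 4 + (∑ t, e t ^ 2) ^ 4)) := by
        gcongr
        exact add_pow_le (by positivity) (sum_nonneg fun _ _ => sq_nonneg _) 4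
    _ ≤ 128 * (n ^ 4 * τ ^ 8 + n ^ 3 * ∑ t, e t ^ 8) := by
        rw [mul_pow, ← pow_mul]
        norm_num
        linarith

lemma sq_integral_sq_projection_periodogram_sub_le {n D : ℕ} {τ q G : ℝ} (y e : Fin n → ℝ)
    (hy : ∀ t, |y t| ≤ τ) (hq : 0 ≤ q) {f : ℝ → ℝ} (hf : Measurable f) (hfG : ∀ ω, |f ω| ≤ G)
    {φ : Fin D → ℝ → ℝ} (hφ2 : ∀ i, MemLp (φ i) 2 (volume.restrict (Icc (-π) π)))
    (hφ : ∀ i j, (∫ ω in Icc (-π) π, φ i ω * φ j ω) = if i = j then 1 else 0) :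
    (∫ s in Icc (-π) π,
        ((∑ i, (∫ w in Icc (-π) π,
              (periodogram n (fun t => y t + e t) w - q) * φ i w) * φ i s)
          - ∑ i, (∫ w in Icc (-π) π, f w * φ i w) * φ i s) ^ 2) ^ 2
      ≤ 32 * π ^ 2 * ((G + q) ^ 4 + 128 * n ^ 4 * τ ^ 8)
        + 4096 * π ^ 2 * n ^ 3 * ∑ t, e t ^ 8 := by
  set S := ∑ t, (y t + e t) ^ 2
  have hG : 0 ≤ G := (abs_nonneg _).trans (hfG 0)
  have hS4 := sum_sq_add_pow_four_le y e hy
  calc _ ≤ (2 * π * (S + (G + q)) ^ 2) ^ 2 :=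
        pow_le_pow_left₀ (integral_nonneg fun _ => sq_nonneg _)
          (integral_sq_projection_periodogram_sub_le _ hq hf hfG hφ2 hφ) 2
    _ = 4 * π ^ 2 * (S + (G + q)) ^ 4 := by ring
    _ ≤ 4 * π ^ 2 * (2 ^ 3 * (S ^ 4 + (G + q) ^ 4)) := by
        gcongr
        exact add_pow_le (sum_nonneg fun _ _ => sq_nonneg _) (by positivity) 4
    _ ≤ _ := by nlinarith [hS4, pi_pos]

lemma integral_sum_pow_eight_of_isLaplace {Ω : Type*} [MeasurableSpace Ω] {P : Measure Ω} {n : ℕ}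
    {ξ : Fin n → Ω → ℝ} {b : ℝ} (hξ : ∀ t, Measurable (ξ t)) (hb : 0 < b)
    (h : ∀ t, IsLaplace P (ξ t) b) :
    Integrable (fun ω => ∑ t, ξ t ω ^ 8) P ∧
      ∫ ω, ∑ t, ξ t ω ^ 8 ∂P = n * (Nat.factorial 8 * b ^ 8) := by
  have heven : ∀ x : ℝ, |x| ^ 8 = x ^ 8 := (by decide : Even 8).pow_abs
  have hint : ∀ t, Integrable (fun ω => ξ t ω ^ 8) P := fun t => by
    simpa only [heven] using (h t).integrable_abs_pow (hξ t).aemeasurable hb 8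
  refine ⟨integrable_finsetSum _ fun t _ => hint t, ?_⟩
  have hmoment : ∀ t, ∫ ω, ξ t ω ^ 8 ∂P = Nat.factorial 8 * b ^ 8 := fun t => by
    simpa only [heven] using (h t).integral_abs_pow (hξ t).aemeasurable hb 8
  simp [integral_finsetSum _ fun t _ => hint t, hmoment]

lemma eighth_moment_terms_le_const_mul {n D : ℕ} (hD : 1 ≤ D) {W τ α : ℝ} (hW : 0 ≤ W)
    (hα : 0 < α) :
    32 * π ^ 2 * (W + 128 * n ^ 4 * τ ^ 8)
        + 4096 * π ^ 2 * n ^ 3 * (n * (Nat.factorial 8 * (2 * τ / α) ^ 8))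
      ≤ 2 ^ 12 * π ^ 2 * (1 + 2 ^ 8 * Nat.factorial 8) * D ^ 2
        * (W + n ^ 4 * τ ^ 8 / min 1 (α ^ 8)) := by
  set T := (n : ℝ) ^ 4 * τ ^ 8 / min 1 (α ^ 8)
  have hmin : 0 < min 1 (α ^ 8) := lt_min one_pos (by positivity)
  have hT1 : (n : ℝ) ^ 4 * τ ^ 8 ≤ T := le_div_self (by positivity) hmin (min_le_left _ _)
  have hT2 : (n : ℝ) ^ 4 * τ ^ 8 / α ^ 8 ≤ T :=
    div_le_div_of_nonneg_left (by positivity) hmin (min_le_right _ _)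
  have hD1 : 1 ≤ (D : ℝ) ^ 2 := one_le_pow₀ (by exact_mod_cast hD)
  have hfact : (Nat.factorial 8 : ℝ) = 40320 := by norm_num [Nat.factorial]
  have hnoise : (n : ℝ) ^ 3 * (n * (40320 * (2 * τ / α) ^ 8))
      = 2 ^ 8 * 40320 * ((n : ℝ) ^ 4 * τ ^ 8 / α ^ 8) := by
    field_simp
  rw [hfact]
  calc _ = 32 * π ^ 2
          * (W + 128 * ((n : ℝ) ^ 4 * τ ^ 8 + n ^ 3 * (n * (40320 * (2 * τ / α) ^ 8)))) := by
        ring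
    _ ≤ 32 * π ^ 2 * (128 * (1 + 2 ^ 8 * 40320) * (W + T)) := by
        refine mul_le_mul_of_nonneg_left ?_ (by positivity)
        linarith
    _ = 2 ^ 12 * π ^ 2 * (1 + 2 ^ 8 * 40320) * (W + T) := by ring
    _ ≤ _ := by
        rw [mul_assoc _ ((D : ℝ) ^ 2)]
        gcongr
        exact le_mul_of_one_le_left (by positivity) hD1

/-- **Fourth-moment bound for the projection estimator.**
There is a numerical constant `C > 0` such that, for the privatized data
`Z_i = ((X_i ∧ τ_n) ∨ (−τ_n)) + ξ_i` of a stationary time series with absolutely summable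
autocovariance `γ`, the projection estimator `f̂_m` on a model of dimension `D_m` and the
projection `f_m` of the spectral density satisfy
`E‖f̂_m − f_m‖⁴ ≤ C D_m² [(∑|γ_k| + 8τ_n²/α²)⁴ + n⁴τ_n⁸/(1 ∧ α⁸)]`. -/
theorem projection_estimator_fourth_moment :
    ∃ C : ℝ, 0 < C ∧
      ∀ (Ω : Type) [MeasurableSpace Ω] (P : Measure Ω), IsProbabilityMeasure P →
      ∀ (X : ℤ → Ω → ℝ), (∀ i, Measurable (X i)) →
      ∀ (μ : ℝ), (∀ i, ∫ x, X i x ∂P = μ) →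
      ∀ (γ : ℤ → ℝ), (Summable fun k : ℤ => |γ k|) →
        (∀ i j : ℤ, ∫ x, (X i x - μ) * (X j x - μ) ∂P = γ (i - j)) →
      ∀ (f : ℝ → ℝ), (∀ ω : ℝ, f ω = (1 / (2 * π)) * ∑' k : ℤ, γ k * Real.cos (k * ω)) →
      ∀ (n : ℕ), 1 ≤ n →
      ∀ (τ α : ℝ), 0 < τ → 0 < α →
      ∀ (ξ : Fin n → Ω → ℝ), (∀ i, Measurable (ξ i)) →
        iIndepFun ξ P →
        (∀ i, IsLaplace P (ξ i) (2 * τ / α)) →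
        IndepFun (fun x (i : ℤ) => X i x) (fun x (i : Fin n) => ξ i x) P →
      ∀ (Z : Fin n → Ω → ℝ),
        (∀ i x, Z i x = max (min (X (i.1 + 1) x) τ) (-τ) + ξ i x) →
      ∀ (D : ℕ), 1 ≤ D →
      ∀ (φ : Fin D → ℝ → ℝ), (∀ i, Measurable (φ i)) →
        (∀ i (ω : ℝ), φ i (-ω) = φ i ω) →
        (∀ i j, (∫ ω in Set.Icc (-π) π, φ i ω * φ j ω) = if i = j then 1 else 0) →
        ∫ x, (∫ s in Set.Icc (-π) π,
            ((∑ i, (∫ w in Set.Icc (-π) π,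
                  (periodogram n (fun t => Z t x) w - 8 * τ ^ 2 / α ^ 2) * φ i w) * φ i s)
              - ∑ i, (∫ w in Set.Icc (-π) π, f w * φ i w) * φ i s) ^ 2) ^ 2 ∂P
          ≤ C * D ^ 2 * (((∑' k : ℤ, |γ k|) + 8 * τ ^ 2 / α ^ 2) ^ 4
              + n ^ 4 * τ ^ 8 / min 1 (α ^ 8)) := by
  refine ⟨2 ^ 12 * π ^ 2 * (1 + 2 ^ 8 * Nat.factorial 8), by positivity, ?_⟩
  intro Ω _ P _ X _ _ _ γ hγ _ f hf n _ τ α hτ hα ξ hξ _ hLap _ Z hZ D hD φ hφm _ hφ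
  set G := ∑' k : ℤ, |γ k|
  set q := 8 * τ ^ 2 / α ^ 2
  have hfm : Measurable f :=
    (funext hf ▸ continuous_const.mul (continuous_tsum_mul_cos hγ) : Continuous f).measurable
  have hfG : ∀ ω, |f ω| ≤ G := fun ω => hf ω ▸ abs_one_div_two_pi_mul_tsum_mul_cos_le hγ ω
  have hφ2 : ∀ i, MemLp (φ i) 2 (volume.restrict (Icc (-π) π)) := fun i =>
    memLp_two_of_integral_mul_self_eq_one (hφm i).aestronglyMeasurable (by simpa using hφ i i)
  have hclip : ∀ x (t : Fin n), |max (min (X (t.1 + 1) x) τ) (-τ)| ≤ τ := fun x t =>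
    abs_le.2 ⟨le_max_right _ _, max_le (min_le_right _ _) (by linarith)⟩
  obtain ⟨hint, hmoment⟩ := integral_sum_pow_eight_of_isLaplace hξ (by positivity) hLap
  simp only [hZ]
  calc _ ≤ ∫ x, 32 * π ^ 2 * ((G + q) ^ 4 + 128 * n ^ 4 * τ ^ 8)
          + 4096 * π ^ 2 * n ^ 3 * ∑ t, ξ t x ^ 8 ∂P :=
        integral_mono_of_nonneg (ae_of_all _ fun _ => sq_nonneg _)
          ((integrable_const _).add (hint.const_mul _)) (ae_of_all _ fun x =>
            sq_integral_sq_projection_periodogram_sub_le _ _ (hclip x) (by positivity) hfm hfG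
              hφ2 hφ)
    _ = 32 * π ^ 2 * ((G + q) ^ 4 + 128 * n ^ 4 * τ ^ 8)
          + 4096 * π ^ 2 * n ^ 3 * (n * (Nat.factorial 8 * (2 * τ / α) ^ 8)) := by
        rw [integral_add (integrable_const _) (hint.const_mul _), integral_const,
          integral_const_mul, hmoment]
        simp
    _ ≤ _ := eighth_moment_terms_le_const_mul hD (by positivity) hα
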